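/- arXiv:1001.4553 — 3 statements merged into one kernel-verified Lean document; each statement's English description precedes it below -/
import Mathlib

section
/- Let A be a finite-dimensional commutative ℂ-algebra, W a ℂ-vector space, and w = Σ_{l=1}^{μ} h_l ⊗ w_l ∈ A ⊗ W where h_1,…,h_μ is a ℂ-basis of A. Suppose g_1,…,g_n ∈ A generate A as a unital algebra, and M_1,…,M_n are commuting linear operators on W satisfying Σ_l h_l ⊗ M_j w_l = Σ_l (g_j h_l) ⊗ w_l for each j. Let Y ⊆ W be the span of w_1,…,w_μ. Then each M_j preserves Y, and the linear map α : A → Y defined using a nondegenerate invariant form (·,·) on A by α(f) = Σ_l (f, h_l) w_l satisfies M_j α(f) = α(g_j f) for all f ∈ A and all j. -/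
open scoped TensorProduct

/-!
Everything follows by contracting the identity `∑ l, h_l ⊗ M_j w_l = ∑ l, g_j h_l ⊗ w_l` in
`A ⊗ W` against linear functionals on `A`. Against the coordinate functionals of the basis it
writes each `M_j w_l` as a combination of the `w_m`; against `B f` it becomes
`M_j (α f) = ∑ l, B f (g_j h_l) • w_l`, which is `α (g_j f)` by invariance of `B`.
-/

section Contraction

variable {R A W ι : Type*} [CommSemiring R] [AddCommMonoid A] [Module R A]
  [AddCommMonoid W] [Module R W]

theorem TensorProduct.sum_smul_eq_of_sum_tmul_eq (φ : A →ₗ[R] R) {s : Finset ι} {a b : ι → A}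
    {x y : ι → W} (h : ∑ i ∈ s, a i ⊗ₜ[R] x i = ∑ i ∈ s, b i ⊗ₜ[R] y i) :
    ∑ i ∈ s, φ (a i) • x i = ∑ i ∈ s, φ (b i) • y i := by
  simpa using congrArg ((TensorProduct.lid R W).toLinearMap ∘ₗ φ.rTensor W) h

theorem Module.Basis.span_le_comap_of_sum_tmul_eq [Fintype ι] (v : Module.Basis ι R A)
    (T : Module.End R W) (c : ι → A) (w : ι → W)
    (h : ∑ l, v l ⊗ₜ[R] T (w l) = ∑ l, c l ⊗ₜ[R] w l) :
    Submodule.span R (Set.range w) ≤ (Submodule.span R (Set.range w)).comap T := by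
  rw [Submodule.span_le, Set.range_subset_iff]
  intro l
  have hTw : T (w l) = ∑ m, v.coord l (c m) • w m := by
    classical
    simpa [Finsupp.single_apply] using TensorProduct.sum_smul_eq_of_sum_tmul_eq (v.coord l) h
  rw [SetLike.mem_coe, Submodule.mem_comap, hTw]
  exact Submodule.sum_mem _ fun m _ => Submodule.smul_mem _ _ (Submodule.subset_span ⟨m, rfl⟩)

end Contraction

theorem LinearMap.BilinForm.map_sum_smul_eq_of_sum_tmul_eq {R A W ι : Type*} [CommSemiring R]
    [CommSemiring A] [Algebra R A] [AddCommMonoid W] [Module R W] [Fintype ι]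
    (B : LinearMap.BilinForm R A) (hinv : ∀ f g h : A, B (f * g) h = B f (g * h))
    (T : Module.End R W) (a : A) (v : ι → A) (w : ι → W)
    (h : ∑ l, v l ⊗ₜ[R] T (w l) = ∑ l, (a * v l) ⊗ₜ[R] w l) (f : A) :
    T (∑ l, B f (v l) • w l) = ∑ l, B (a * f) (v l) • w l := by
  calc T (∑ l, B f (v l) • w l)
      = ∑ l, B f (v l) • T (w l) := by simp only [map_sum, map_smul]
    _ = ∑ l, B f (a * v l) • w l := TensorProduct.sum_smul_eq_of_sum_tmul_eq (B f) h
    _ = ∑ l, B (a * f) (v l) • w l := by simp only [← hinv, mul_comm f a]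

theorem bethe_operators_preserve_span_and_intertwine_general
    {A : Type*} [CommRing A] [Algebra ℂ A]
    (B : LinearMap.BilinForm ℂ A)
    (hinv : ∀ f g h : A, B (f * g) h = B f (g * h))
    {μ nn : ℕ} (bh : Module.Basis (Fin μ) ℂ A)
    {W : Type*} [AddCommGroup W] [Module ℂ W]
    (M : Fin nn → Module.End ℂ W)
    (g : Fin nn → A)
    (w : Fin μ → W)
    (hid : ∀ j, (∑ l : Fin μ, (bh l) ⊗ₜ[ℂ] (M j (w l)) : A ⊗[ℂ] W) =
      ∑ l : Fin μ, (g j * bh l) ⊗ₜ[ℂ] (w l)) :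
    (∀ j, ∀ y ∈ Submodule.span ℂ (Set.range w),
        M j y ∈ Submodule.span ℂ (Set.range w)) ∧
    (∀ j, ∀ f : A,
        M j (∑ l : Fin μ, B f (bh l) • w l) = ∑ l : Fin μ, B (g j * f) (bh l) • w l) :=
  ⟨fun j _ hy => bh.span_le_comap_of_sum_tmul_eq (M j) _ w (hid j) hy,
    fun j => B.map_sum_smul_eq_of_sum_tmul_eq hinv (M j) (g j) bh w (hid j)⟩

/-- Abstract Bethe setting: `A` a finite-dimensional commutative ℂ-algebra with nondegenerate
invariant symmetric form `B` and basis `bh`; `W` a vector space with commuting operators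
`M j`; `g j` generators of `A`; `w l ∈ W` with `∑ l, bh l ⊗ M j (w l) = ∑ l, (g j * bh l) ⊗ w l`
in `A ⊗ W`.  Then each `M j` preserves `Y = span(w)`, and the map
`α : f ↦ ∑ l, B f (bh l) • w l` satisfies `M j (α f) = α (g j * f)`. -/
theorem bethe_operators_preserve_span_and_intertwine
    {A : Type*} [CommRing A] [Algebra ℂ A] [Module.Finite ℂ A]
    (B : LinearMap.BilinForm ℂ A)
    (hsymm : ∀ f g : A, B f g = B g f)
    (hinv : ∀ f g h : A, B (f * g) h = B f (g * h))
    (hnd : ∀ f : A, (∀ g : A, B f g = 0) → f = 0)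
    {μ nn : ℕ} (bh : Module.Basis (Fin μ) ℂ A)
    {W : Type*} [AddCommGroup W] [Module ℂ W]
    (M : Fin nn → Module.End ℂ W)
    (hcomm : ∀ i j, M i * M j = M j * M i)
    (g : Fin nn → A) (hgen : Algebra.adjoin ℂ (Set.range g) = ⊤)
    (w : Fin μ → W)
    (hid : ∀ j, (∑ l : Fin μ, (bh l) ⊗ₜ[ℂ] (M j (w l)) : A ⊗[ℂ] W) =
      ∑ l : Fin μ, (g j * bh l) ⊗ₜ[ℂ] (w l)) :
    (∀ j, ∀ y ∈ Submodule.span ℂ (Set.range w),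
        M j y ∈ Submodule.span ℂ (Set.range w)) ∧
    (∀ j, ∀ f : A,
        M j (∑ l : Fin μ, B f (bh l) • w l) = ∑ l : Fin μ, B (g j * f) (bh l) • w l) :=
  bethe_operators_preserve_span_and_intertwine_general B hinv bh M g w hid
end

section
/- Let Φ = Σ_{j∈J} a_j log f_j be the master function of a weighted essential affine arrangement 𝒜 in ℂ^k with all weights a_j ≠ 0. Then a point t in the complement U is a critical point of Φ if and only if the special vector v(t) ∈ 𝓕^k(𝒜) is singular, i.e., δ^{(a)} v(t) = 0. -/
/-!
Put `f_j = g_j(t) + z_j` and `L = Σ_j (a_j / f_j) g_j`. Since the determinant is linear in its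
first row, the pairing of `v(t)` with `ν(a)·(H_{j₁},…,H_{j_k})` equals
`det(L, g_{j₁}, …, g_{j_k}) / ∏_r f_{j_r}`. By essentiality some `g_{i_0}, …, g_{i_k}` form a
basis, and `det(L, g_{i_0}, …, ĝ_{i_r}, …, g_{i_k}) = 0` says exactly that `L` has no
`g_{i_r}`-coordinate; so all these determinants vanish iff `L = 0`.
-/

open Submodule

namespace Module.Basis

variable {ι R M : Type*} [Semiring R] [AddCommMonoid M] [Module R M]

theorem eq_zero_of_forall_mem_span_image_compl (b : Basis ι R M) {x : M}
    (hx : ∀ i, x ∈ span R (b '' {i}ᶜ)) : x = 0 := by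
  refine b.repr.injective (Finsupp.ext fun i => ?_)
  have hsupp : i ∉ (b.repr x).support := fun hi => b.mem_span_image.mp (hx i) hi rfl
  simpa using hsupp

end Module.Basis

namespace Matrix

variable {K : Type*} [Field K] {m : ℕ}

theorem det_of_cons_eq_zero_iff_mem_span {W : Fin m → Fin (m + 1) → K}
    (hW : LinearIndependent K W) (x : Fin (m + 1) → K) :
    (of (Fin.cons x W : Fin (m + 1) → Fin (m + 1) → K)).det = 0 ↔ x ∈ span K (Set.range W) := by
  rw [← not_iff_not, ← ne_eq, ← isUnit_iff_ne_zero, ← isUnit_iff_isUnit_det,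
    ← linearIndependent_rows_iff_isUnit]
  exact linearIndependent_finCons.trans (and_iff_right hW)

theorem eq_zero_of_forall_det_of_cons_succAbove_eq_zero {v : Fin (m + 1) → Fin (m + 1) → K}
    (hv : LinearIndependent K v) {x : Fin (m + 1) → K}
    (hx : ∀ i : Fin (m + 1),
      (of (Fin.cons x (v ∘ i.succAbove) : Fin (m + 1) → Fin (m + 1) → K)).det = 0) :
    x = 0 := by
  let b := basisOfLinearIndependentOfCardEqFinrank hv (by simp)
  refine b.eq_zero_of_forall_mem_span_image_compl fun i => ?_
  rw [coe_basisOfLinearIndependentOfCardEqFinrank, ← Fin.range_succAbove, ← Set.range_comp]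
  exact (det_of_cons_eq_zero_iff_mem_span (hv.comp _ Fin.succAbove_right_injective) x).mp (hx i)

theorem eq_zero_iff_forall_det_of_cons_eq_zero {ι : Type*} {w : ι → Fin (m + 1) → K}
    (hw : ∃ js : Fin (m + 1) → ι, LinearIndependent K (w ∘ js)) (x : Fin (m + 1) → K) :
    x = 0 ↔
      ∀ js : Fin m → ι, (of (Fin.cons x (w ∘ js) : Fin (m + 1) → Fin (m + 1) → K)).det = 0 := by
  refine ⟨fun hx js => ?_, fun hx => ?_⟩
  · subst hx
    exact det_eq_zero_of_row_eq_zero 0 fun _ => rfl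
  · obtain ⟨js, hjs⟩ := hw
    exact eq_zero_of_forall_det_of_cons_succAbove_eq_zero hjs fun i => hx (js ∘ i.succAbove)

def detConsLinear (W : Fin m → Fin (m + 1) → K) : (Fin (m + 1) → K) →ₗ[K] K :=
  detRowAlternating.toMultilinearMap.toLinearMap (Fin.cons 0 W) 0

theorem detConsLinear_apply (W : Fin m → Fin (m + 1) → K) (x : Fin (m + 1) → K) :
    detConsLinear W x = (of (Fin.cons x W : Fin (m + 1) → Fin (m + 1) → K)).det := by
  simp only [detConsLinear, MultilinearMap.toLinearMap_apply, Fin.update_cons_zero]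
  rfl

theorem sum_mul_det_of_cons_div_prod {n : ℕ} (a f : Fin n → K) (w : Fin n → Fin (m + 1) → K)
    (js : Fin m → Fin n) :
    ∑ j, a j * ((of fun i => w ((Fin.cons j js : Fin (m + 1) → Fin n) i)).det /
        ∏ i, f ((Fin.cons j js : Fin (m + 1) → Fin n) i)) =
      (of (Fin.cons (∑ j, (a j / f j) • w j) (w ∘ js) : Fin (m + 1) → Fin (m + 1) → K)).det /
        ∏ r, f (js r) := by
  rw [← detConsLinear_apply, map_sum, Finset.sum_div]
  refine Finset.sum_congr rfl fun j _ => ?_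
  have hrows : (fun i => w ((Fin.cons j js : Fin (m + 1) → Fin n) i)) = Fin.cons (w j) (w ∘ js) :=
    Fin.comp_cons w j js
  rw [map_smul, detConsLinear_apply, smul_eq_mul, hrows, Fin.prod_univ_succ]
  simp only [Fin.cons_zero, Fin.cons_succ]
  ring

end Matrix

open Matrix in
theorem critical_point_iff_special_vector_singular_general
    (k n : ℕ)
    (g : Fin n → ((Fin (k+1) → ℂ) →ₗ[ℂ] ℂ)) (z a : Fin n → ℂ)
    (hess : ∃ js : Fin (k+1) → Fin n, LinearIndependent ℂ (g ∘ js))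
    (t : Fin (k+1) → ℂ) (ht : ∀ j, g j t + z j ≠ 0) :
    (∑ j : Fin n, (a j / (g j t + z j)) • g j = 0) ↔
    (∀ js : Fin k → Fin n, ∑ j : Fin n, a j *
      ((Matrix.of fun i i' : Fin (k+1) =>
          g ((Fin.cons j js : Fin (k+1) → Fin n) i) (Pi.single i' 1)).det /
        ∏ i : Fin (k+1), (g ((Fin.cons j js : Fin (k+1) → Fin n) i) t + z ((Fin.cons j js : Fin (k+1) → Fin n) i))) = 0) := by
  set e := (Pi.basisFun ℂ (Fin (k + 1))).dualBasis.equivFun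
  have hess' : ∃ js, LinearIndependent ℂ ((e ∘ g) ∘ js) :=
    hess.imp fun js h => h.map' e.toLinearMap e.ker
  rw [← e.map_eq_zero_iff, eq_zero_iff_forall_det_of_cons_eq_zero hess', map_sum]
  refine forall_congr' fun js => ?_
  have hrows : ∀ j, (of fun i i' => g ((Fin.cons j js : Fin (k + 1) → Fin n) i) (Pi.single i' 1)) =
      of fun i => (e ∘ g) ((Fin.cons j js : Fin (k + 1) → Fin n) i) := fun j => by
    ext; simp [e]
  simp only [hrows, map_smul]
  rw [sum_mul_det_of_cons_div_prod a (fun j => g j t + z j) (e ∘ g) js, div_eq_zero_iff,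
    or_iff_left (Finset.prod_ne_zero_iff.mpr fun r _ => ht (js r))]
  rfl

/-- **Critical points of the master function and singular special vectors.**
For the arrangement `H_j = {g_j(t) + z_j = 0}` in `ℂ^{k+1}` (essential: some `k+1` of the
linear parts are independent) with nonzero weights `a_j` and master function
`Φ = Σ_j a_j log(g_j(t)+z_j)`, a point `t` of the complement is a critical point of `Φ`
(i.e. `dΦ|_t = Σ_j (a_j/f_j(t))·g_j = 0`) if and only if the special vector `v(t)` is
singular, `δ^{(a)} v(t) = 0`.  The special vector is given on the Orlik–Solomon generators by
`⟨(H_{i₀},…,H_{i_k}), v(t)⟩ = det(g_{i_r}(e_s)) / ∏_r f_{i_r}(t)`, and singularity means that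
the pairing of `v(t)` with each generator `ν(a)·(H_{j₁},…,H_{j_k})` of `ν(a)·OS^k` vanishes. -/
theorem critical_point_iff_special_vector_singular
    (k n : ℕ)
    (g : Fin n → ((Fin (k+1) → ℂ) →ₗ[ℂ] ℂ)) (z a : Fin n → ℂ)
    (ha : ∀ j, a j ≠ 0) (hg : ∀ j, g j ≠ 0)
    (hess : ∃ js : Fin (k+1) → Fin n, LinearIndependent ℂ (g ∘ js))
    (t : Fin (k+1) → ℂ) (ht : ∀ j, g j t + z j ≠ 0) :
    (∑ j : Fin n, (a j / (g j t + z j)) • g j = 0) ↔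
    (∀ js : Fin k → Fin n, ∑ j : Fin n, a j *
      ((Matrix.of fun i i' : Fin (k+1) =>
          g ((Fin.cons j js : Fin (k+1) → Fin n) i) (Pi.single i' 1)).det /
        ∏ i : Fin (k+1), (g ((Fin.cons j js : Fin (k+1) → Fin n) i) t + z ((Fin.cons j js : Fin (k+1) → Fin n) i))) = 0) :=
  critical_point_iff_special_vector_singular_general k n g z a hess t ht
end

section
/- Let Φ be the master function of a weighted essential arrangement 𝒜 in ℂ^k with nonzero weights, and let E = Σ_m f^m ⊗ F_m ∈ ℂ(t)_U ⊗ 𝓕^k(𝒜) be the canonical element (where (F_m) is a basis of 𝓕^k(𝒜) with dual basis H^m = f^m dt_1∧⋯∧dt_k of OS^k(𝒜)). Then the image [E] of E in A_Φ ⊗ 𝓕^k(𝒜) lies in A_Φ ⊗ Sing 𝓕^k(𝒜), where A_Φ = ℂ(t)_U/I_Φ is the algebra of functions on the critical set. -/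
open MvPolynomial

/-! In the presentation `ℂ(t)_U = ℂ[t, y]/(y_j f_j − 1)`, `y_j = 1/f_j`, the canonical element
pairs with `(H_{i₀},…,H_{i_k})` to `det (g_{i_r}(e_s)) · ∏_r y_{i_r}`, and
`∂Φ/∂t_s = Σ_j a_j g_j(e_s) y_j`. Expanding the determinant along the row of the varying
hyperplane `H_j` writes the pairing of `E` with `ν(a)·(H_{j₁},…,H_{j_k}) = Σ_j a_j (H_j,H_{j₁},…,H_{j_k})`
as `Σ_s ± minor_s · y_{j₁}⋯y_{j_k} · ∂Φ/∂t_s`, which lies in `I_Φ`. -/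

section LaplaceExpansion

variable {R ι : Type*} [CommRing R] {k : ℕ}

theorem Matrix.det_of_cons_row (G : ι → Fin (k+1) → R) (j : ι) (js : Fin k → ι) :
    (Matrix.of fun i i' => G ((Fin.cons j js : Fin (k+1) → ι) i) i').det =
      ∑ s : Fin (k+1),
        (-1) ^ (s : ℕ) * G j s * (Matrix.of fun r s' => G (js r) (s.succAbove s')).det := by
  rw [Matrix.det_succ_row_zero]
  rfl

variable [Fintype ι]

theorem sum_mul_det_cons_mul_prod_eq (c y : ι → R) (G : ι → Fin (k+1) → R) (js : Fin k → ι) :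
    ∑ j, c j * (Matrix.of fun i i' => G ((Fin.cons j js : Fin (k+1) → ι) i) i').det *
        ∏ i, y ((Fin.cons j js : Fin (k+1) → ι) i) =
      ∑ s : Fin (k+1), ((-1) ^ (s : ℕ) * (Matrix.of fun r s' => G (js r) (s.succAbove s')).det *
        ∏ r, y (js r)) * ∑ j, c j * G j s * y j := by
  simp only [Matrix.det_of_cons_row, Fin.prod_univ_succ, Fin.cons_zero, Fin.cons_succ,
    Finset.mul_sum, Finset.sum_mul]
  rw [Finset.sum_comm]
  refine Finset.sum_congr rfl fun s _ => Finset.sum_congr rfl fun j _ => ?_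
  ring

theorem sum_mul_det_cons_mul_prod_mem_span (c y : ι → R) (G : ι → Fin (k+1) → R)
    (js : Fin k → ι) :
    ∑ j, c j * (Matrix.of fun i i' => G ((Fin.cons j js : Fin (k+1) → ι) i) i').det *
        ∏ i, y ((Fin.cons j js : Fin (k+1) → ι) i) ∈
      Ideal.span (Set.range fun s => ∑ j, c j * G j s * y j) := by
  rw [sum_mul_det_cons_mul_prod_eq]
  exact Ideal.sum_mem _ fun s _ => Ideal.mul_mem_left _ _ (Ideal.subset_span ⟨s, rfl⟩)

end LaplaceExpansion

theorem canonical_element_lies_in_singular_subspace_general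
    (k n : ℕ)
    (g : Fin n → ((Fin (k+1) → ℂ) →ₗ[ℂ] ℂ)) (z a : Fin n → ℂ) :
    ∀ js : Fin k → Fin n,
      (∑ j : Fin n,
        C (a j * (Matrix.of fun i i' : Fin (k+1) =>
            g ((Fin.cons j js : Fin (k+1) → Fin n) i) (Pi.single i' 1)).det) *
          ∏ i : Fin (k+1), X (Sum.inr ((Fin.cons j js : Fin (k+1) → Fin n) i)) :
        MvPolynomial (Fin (k+1) ⊕ Fin n) ℂ)
      ∈ Ideal.span (
        (Set.range fun j' : Fin n =>
          (X (Sum.inr j') *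
            (C (z j') + ∑ i : Fin (k+1), C (g j' (Pi.single i 1)) * X (Sum.inl i)) - 1 :
              MvPolynomial (Fin (k+1) ⊕ Fin n) ℂ)) ∪
        (Set.range fun i : Fin (k+1) =>
          (∑ j' : Fin n, C (a j' * g j' (Pi.single i 1)) * X (Sum.inr j') :
              MvPolynomial (Fin (k+1) ⊕ Fin n) ℂ))) := by
  intro js
  refine Ideal.span_mono Set.subset_union_right ?_
  have h := sum_mul_det_cons_mul_prod_mem_span (R := MvPolynomial (Fin (k+1) ⊕ Fin n) ℂ)
    (fun j => C (a j)) (fun j => X (Sum.inr j)) (fun j s => C (g j (Pi.single s 1))) js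
  simp only [map_mul, RingHom.map_det] at h ⊢
  exact h

/-- **The canonical element projects into `A_Φ ⊗ Sing 𝓕^k`.**
For the weighted essential arrangement `H_j = {g_j(t)+z_j = 0}` in `ℂ^{k+1}` with nonzero
weights `a_j`, the algebra `ℂ(t)_U` of rational functions regular on the complement is
presented as `ℂ[t, y_1,…,y_n]/(y_j f_j − 1)` with `y_j = 1/f_j`, and
`A_Φ = ℂ(t)_U / I_Φ` where `I_Φ` is generated by `∂Φ/∂t_i = Σ_j a_j g_j(e_i) y_j`.
The canonical element `E` pairs with `(H_{i₀},…,H_{i_k}) ∈ OS^{k+1}` to the coefficient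
function `det(g_{i_r}(e_s))·∏_r y_{i_r}`.  The statement `[E] ∈ A_Φ ⊗ Sing 𝓕^{k+1}` says
exactly that the pairing of `E` with every generator `ν(a)·(H_{j₁},…,H_{j_k}) =
Σ_j a_j (H_j,H_{j₁},…,H_{j_k})` of `ν(a)·OS^k` lies in `I_Φ`, i.e. belongs to the ideal
generated by both families of relations in the polynomial presentation. -/
theorem canonical_element_lies_in_singular_subspace
    (k n : ℕ)
    (g : Fin n → ((Fin (k+1) → ℂ) →ₗ[ℂ] ℂ)) (z a : Fin n → ℂ)
    (ha : ∀ j, a j ≠ 0) (hg : ∀ j, g j ≠ 0)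
    (hess : ∃ js : Fin (k+1) → Fin n, LinearIndependent ℂ (g ∘ js)) :
    ∀ js : Fin k → Fin n,
      (∑ j : Fin n,
        C (a j * (Matrix.of fun i i' : Fin (k+1) =>
            g ((Fin.cons j js : Fin (k+1) → Fin n) i) (Pi.single i' 1)).det) *
          ∏ i : Fin (k+1), X (Sum.inr ((Fin.cons j js : Fin (k+1) → Fin n) i)) :
        MvPolynomial (Fin (k+1) ⊕ Fin n) ℂ)
      ∈ Ideal.span (
        (Set.range fun j' : Fin n =>
          (X (Sum.inr j') *
            (C (z j') + ∑ i : Fin (k+1), C (g j' (Pi.single i 1)) * X (Sum.inl i)) - 1 :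
              MvPolynomial (Fin (k+1) ⊕ Fin n) ℂ)) ∪
        (Set.range fun i : Fin (k+1) =>
          (∑ j' : Fin n, C (a j' * g j' (Pi.single i 1)) * X (Sum.inr j') :
              MvPolynomial (Fin (k+1) ⊕ Fin n) ℂ))) :=
  canonical_element_lies_in_singular_subspace_general k n g z a
end
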